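/- Let A ∈ F_q[X] be an additive polynomial that is not of the form aX^{p^h} with a ∈ F_q and h ≥ 0, and for each integer n ≥ 1 let π_A(n) be the number of elements of F_{q^n} that are periodic under the map z ↦ A(z). Then liminf_{n→∞} π_A(n)/q^n = 0 and limsup_{n→∞} π_A(n)/q^n > 0. -/

import Mathlib

open Polynomial Filter

/-- A polynomial over a field of characteristic `p` is additive iff every
monomial with nonzero coefficient has exponent a power of `p`
(equivalently, `A(X) = ∑ aᵢ X^(pⁱ)`). -/
def IsAdditivePoly {F : Type*} [Field F] (p : ℕ) (A : Polynomial F) : Prop :=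
  ∀ i : ℕ, A.coeff i ≠ 0 → ∃ h : ℕ, i = p ^ h

/-- `polyIter P n` is the `n`-fold composition `P^{(n)}` of `P` with itself,
with the convention `P^{(0)} = X`. -/
noncomputable def polyIter {F : Type*} [Field F] (P : Polynomial F) (n : ℕ) : Polynomial F :=
  (fun Q => P.comp Q)^[n] Polynomial.X

/-- `SplitsIn P j` : `P` splits completely over `F_{q^j}`, i.e. every root of
`P` in an algebraic closure of `F` lies in the subfield with `q^j` elements,
where `q = #F`. -/
def SplitsIn {F : Type*} [Field F] [Fintype F] (P : Polynomial F) (j : ℕ) : Prop :=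
  ∀ y : AlgebraicClosure F, Polynomial.aeval y P = 0 → y ^ Fintype.card F ^ j = y

/-- `sDeg P n` : the degree over `F_q` of the splitting field of the `n`-th
iterate `P^{(n)}`, i.e. the least positive `j` such that `P^{(n)}` splits
completely in `F_{q^j}`. -/
noncomputable def sDeg {F : Type*} [Field F] [Fintype F] (P : Polynomial F) (n : ℕ) : ℕ :=
  sInf {j : ℕ | 0 < j ∧ SplitsIn (polyIter P n) j}

/-- `periodicCount A n` : the number of elements of `F_{q^n}` (realized inside
an algebraic closure of `F` as the subfield of elements fixed by the `n`-th
power of the `q`-Frobenius) that are periodic under the map `z ↦ A(z)`. -/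
noncomputable def periodicCount {F : Type*} [Field F] [Fintype F]
    (A : Polynomial F) (n : ℕ) : ℕ :=
  Nat.card {y : AlgebraicClosure F // y ^ Fintype.card F ^ n = y ∧
    ∃ t : ℕ, 0 < t ∧ (fun z => Polynomial.aeval z A)^[t] y = y}

section Aux
variable {p : ℕ} [Fact p.Prime] {F : Type*} [Field F] [Fintype F] [CharP F p]

/-- the map z ↦ A(z) on the algebraic closure -/
noncomputable def Lm (A : Polynomial F) : AlgebraicClosure F → AlgebraicClosure F :=
  fun x => aeval x A

theorem Lm_add (A : Polynomial F) (hA : IsAdditivePoly p A) (x y : AlgebraicClosure F) :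
    Lm A (x + y) = Lm A x + Lm A y := by
  have hp : Fact p.Prime := inferInstance
  simp only [Lm, aeval_def, eval₂_eq_sum, Polynomial.sum]
  rw [← Finset.sum_add_distrib]
  refine Finset.sum_congr rfl fun i hi => ?_
  obtain ⟨h, rfl⟩ := hA i (Polynomial.mem_support_iff.mp hi)
  rw [add_pow_char_pow, mul_add]

include p in
/-- q-power frobenius on the closure, as a ring hom fixing F -/
theorem exists_powQ (j : ℕ) : ∃ σ : AlgebraicClosure F →+* AlgebraicClosure F,
    (∀ x, σ x = x ^ (Fintype.card F) ^ j) ∧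
      (∀ c : F, σ (algebraMap F (AlgebraicClosure F) c) = algebraMap F (AlgebraicClosure F) c) := by
  obtain ⟨f, hpp, hf⟩ := FiniteField.card F p
  refine ⟨iterateFrobenius (AlgebraicClosure F) p (f * j), fun x => ?_, fun c => ?_⟩
  · rw [iterateFrobenius_def, hf, ← pow_mul]
  · rw [iterateFrobenius_def, ← map_pow]
    congr 1
    rw [pow_mul, ← hf]
    exact FiniteField.pow_card_pow j c

include p in
theorem Lm_pow_q (A : Polynomial F) (j : ℕ) (x : AlgebraicClosure F) :
    Lm A (x ^ (Fintype.card F) ^ j) = (Lm A x) ^ (Fintype.card F) ^ j := by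
  obtain ⟨σ, hσ, hσc⟩ := exists_powQ (p := p) (F := F) j
  rw [← hσ, ← hσ]
  simp only [Lm, aeval_def]
  rw [hom_eval₂]
  congr 1
  exact (RingHom.ext fun c => hσc c).symm

end Aux

section Aux2
variable {p : ℕ} [Fact p.Prime] {F : Type*} [Field F] [Fintype F] [CharP F p]

set_option linter.unusedSectionVars false

theorem support_facts (A : Polynomial F) (hA : IsAdditivePoly p A)
    (hexc : ¬ ∃ (a : F) (h : ℕ), A = Polynomial.C a * Polynomial.X ^ p ^ h) :
    ∃ i j, i ∈ A.support ∧ j ∈ A.support ∧ i < j ∧ 2 ≤ A.natDegree := by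
  have hp := (Fact.out : p.Prime)
  have hcard : 1 < A.support.card := by
    by_contra hle
    push_neg at hle
    interval_cases h : A.support.card
    · have : A = 0 := by
        rwa [Finset.card_eq_zero, Polynomial.support_eq_empty] at h
      exact hexc ⟨0, 0, by rw [this, map_zero, zero_mul]⟩
    · obtain ⟨k, x, hx, rfl⟩ := Polynomial.card_support_eq_one.mp h
      obtain ⟨hh, rfl⟩ := hA k (by
        simpa [Polynomial.coeff_C_mul, Polynomial.coeff_X_pow] using hx)
      exact hexc ⟨x, hh, rfl⟩
  obtain ⟨a, ha, b, hb, hab⟩ := Finset.one_lt_card.mp hcard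
  rcases hab.lt_or_gt with hlt | hlt
  · refine ⟨a, b, ha, hb, hlt, ?_⟩
    obtain ⟨hb', rfl⟩ := hA b (Polynomial.mem_support_iff.mp hb)
    have hble := Polynomial.le_natDegree_of_ne_zero (Polynomial.mem_support_iff.mp hb)
    have : 2 ≤ p ^ hb' := by
      rcases Nat.eq_zero_or_pos hb' with rfl | hpos
      · obtain ⟨ha', rfl⟩ := hA a (Polynomial.mem_support_iff.mp ha)
        simp only [pow_zero] at hlt
        have := pow_pos hp.pos ha'
        omega
      · calc 2 ≤ p := hp.two_le
          _ = p ^ 1 := (pow_one p).symm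
          _ ≤ p ^ hb' := Nat.pow_le_pow_right hp.pos hpos
    omega
  · refine ⟨b, a, hb, ha, hlt, ?_⟩
    obtain ⟨ha', rfl⟩ := hA a (Polynomial.mem_support_iff.mp ha)
    have hale := Polynomial.le_natDegree_of_ne_zero (Polynomial.mem_support_iff.mp ha)
    have : 2 ≤ p ^ ha' := by
      rcases Nat.eq_zero_or_pos ha' with rfl | hpos
      · obtain ⟨hb', rfl⟩ := hA b (Polynomial.mem_support_iff.mp hb)
        simp only [pow_zero] at hlt
        have := pow_pos hp.pos hb'
        omega
      · calc 2 ≤ p := hp.two_le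
          _ = p ^ 1 := (pow_one p).symm
          _ ≤ p ^ ha' := Nat.pow_le_pow_right hp.pos hpos
    omega

end Aux2

noncomputable def polyIter' {F : Type*} [Field F] (P : Polynomial F) (n : ℕ) : Polynomial F :=
  (fun Q => P.comp Q)^[n] Polynomial.X

section Aux3
set_option linter.unusedSectionVars false
variable {p : ℕ} [Fact p.Prime] {F : Type*} [Field F] [Fintype F] [CharP F p]

theorem aeval_polyIter' (A : Polynomial F) (t : ℕ) (x : AlgebraicClosure F) :
    aeval x (polyIter' A t) = (Lm A)^[t] x := by
  induction t with
  | zero => simp [polyIter']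
  | succ t ih =>
    rw [polyIter', Function.iterate_succ_apply', ← polyIter', aeval_comp,
      Function.iterate_succ_apply', ih]
    rfl

theorem natDegree_polyIter' (A : Polynomial F) (t : ℕ) :
    (polyIter' A t).natDegree = A.natDegree ^ t := by
  induction t with
  | zero => simp [polyIter']
  | succ t ih =>
    rw [polyIter', Function.iterate_succ_apply', ← polyIter', Polynomial.natDegree_comp, ih,
      pow_succ, mul_comm]

theorem Kk_finite (A : Polynomial F) (hd : 2 ≤ A.natDegree) (t : ℕ) :
    {x : AlgebraicClosure F | (Lm A)^[t] x = 0}.Finite := by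
  have hne : (polyIter' A t).map (algebraMap F (AlgebraicClosure F)) ≠ 0 := by
    refine Polynomial.map_ne_zero ?_
    refine Polynomial.ne_zero_of_natDegree_gt (n := 0) ?_
    rw [natDegree_polyIter']
    positivity
  refine Set.Finite.subset (Polynomial.finite_setOf_isRoot hne) ?_
  intro x hx
  simp only [Set.mem_setOf_eq] at hx ⊢
  rw [Polynomial.IsRoot, Polynomial.eval_map, ← aeval_def, aeval_polyIter', hx]

theorem exists_root_ne_zero (A : Polynomial F) (hA : IsAdditivePoly p A)
    (hexc : ¬ ∃ (a : F) (h : ℕ), A = Polynomial.C a * Polynomial.X ^ p ^ h) :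
    ∃ z : AlgebraicClosure F, z ≠ 0 ∧ Lm A z = 0 := by
  obtain ⟨i, j, hi, hj, hij, hd⟩ := support_facts A hA hexc
  by_contra hcon
  push_neg at hcon
  set B := A.map (algebraMap F (AlgebraicClosure F)) with hB
  have hA0 : A ≠ 0 := fun h => by simp [h] at hi
  have hB0 : B ≠ 0 := Polynomial.map_ne_zero hA0
  have hsplits : B.Splits := IsAlgClosed.splits B
  have hcard : Multiset.card B.roots = B.natDegree := (Polynomial.splits_iff_card_roots).mp hsplits
  have heq := Polynomial.C_leadingCoeff_mul_prod_multiset_X_sub_C hcard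
  have hzero : ∀ a ∈ B.roots, a = (0 : AlgebraicClosure F) := by
    intro a ha
    have h2 : Polynomial.eval a B = 0 := (Polynomial.mem_roots hB0).mp ha
    by_contra hne
    refine hcon a hne ?_
    rwa [hB, Polynomial.eval_map, ← aeval_def] at h2
  have hprod : (B.roots.map fun a => X - C a).prod = X ^ B.natDegree := by
    have : (B.roots.map fun a => X - C a) =
        Multiset.replicate B.natDegree (X : Polynomial (AlgebraicClosure F)) := by
      have hlen : Multiset.card (B.roots.map fun a => X - C a) = B.natDegree := by
        rw [Multiset.card_map, hcard]
      rw [← hlen, Multiset.eq_replicate_card]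
      intro x hx
      obtain ⟨a, ha, rfl⟩ := Multiset.mem_map.mp hx
      rw [hzero a ha, map_zero, sub_zero]
    rw [this, Multiset.prod_replicate]
  rw [hprod] at heq
  -- B = C lc * X ^ natDegree, contradiction with coeff at i
  have hiA : A.coeff i ≠ 0 := Polynomial.mem_support_iff.mp hi
  have hjle : j ≤ A.natDegree := Polynomial.le_natDegree_of_ne_zero (Polynomial.mem_support_iff.mp hj)
  have hindeg : i ≠ B.natDegree := by
    rw [hB, Polynomial.natDegree_map]
    omega
  have : B.coeff i = 0 := by
    rw [← heq, Polynomial.coeff_C_mul, Polynomial.coeff_X_pow, if_neg hindeg, mul_zero]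
  rw [hB, Polynomial.coeff_map] at this
  exact hiA ((_root_.map_eq_zero (algebraMap F (AlgebraicClosure F))).mp this)

theorem Lm_surjective (A : Polynomial F) (hd : 2 ≤ A.natDegree) :
    Function.Surjective (Lm A) := by
  intro c
  set B := A.map (algebraMap F (AlgebraicClosure F)) - C c with hB
  have hdeg : B.natDegree = A.natDegree := by
    rw [hB, Polynomial.natDegree_sub_C, Polynomial.natDegree_map]
  have hB0 : B ≠ 0 := Polynomial.ne_zero_of_natDegree_gt (n := 0) (by omega)
  have : B.degree ≠ 0 := by
    rw [Polynomial.degree_eq_natDegree hB0, hdeg]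
    exact_mod_cast (by omega : A.natDegree ≠ 0)
  obtain ⟨x, hx⟩ := IsAlgClosed.exists_root B this
  refine ⟨x, ?_⟩
  have := hx
  rw [Polynomial.IsRoot, hB] at this
  simp only [Polynomial.eval_sub, Polynomial.eval_map, Polynomial.eval_C, ← aeval_def,
    sub_eq_zero] at this
  exact this

end Aux3

section Aux4
set_option linter.unusedSectionVars false
variable {p : ℕ} [Fact p.Prime] {F : Type*} [Field F] [Fintype F] [CharP F p]

theorem Lm_iter_add (A : Polynomial F) (hA : IsAdditivePoly p A) (t : ℕ)
    (x y : AlgebraicClosure F) :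
    (Lm A)^[t] (x + y) = (Lm A)^[t] x + (Lm A)^[t] y :=
  iterate_map_add (AddMonoidHom.mk' (Lm A) (Lm_add A hA)) t x y

theorem Lm_zero (A : Polynomial F) (hA : IsAdditivePoly p A) : Lm A 0 = 0 :=
  map_zero (AddMonoidHom.mk' (Lm A) (Lm_add A hA))

theorem Lm_iter_sub (A : Polynomial F) (hA : IsAdditivePoly p A) (t : ℕ)
    (x y : AlgebraicClosure F) :
    (Lm A)^[t] (x - y) = (Lm A)^[t] x - (Lm A)^[t] y :=
  iterate_map_sub (AddMonoidHom.mk' (Lm A) (Lm_add A hA)) t x y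

theorem Lm_nsmul (A : Polynomial F) (hA : IsAdditivePoly p A) (n : ℕ) (x : AlgebraicClosure F) :
    Lm A (n • x) = n • Lm A x :=
  map_nsmul (AddMonoidHom.mk' (Lm A) (Lm_add A hA)) n x

theorem card_Kk (A : Polynomial F) (hA : IsAdditivePoly p A)
    (hexc : ¬ ∃ (a : F) (h : ℕ), A = Polynomial.C a * Polynomial.X ^ p ^ h) (t : ℕ) :
    p ^ t ≤ Nat.card {x : AlgebraicClosure F | (Lm A)^[t] x = 0} := by
  obtain ⟨i, j, hi, hj, hij, hd⟩ := support_facts A hA hexc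
  obtain ⟨z₀, hz0, hz0k⟩ := exists_root_ne_zero A hA hexc
  choose g hg using Lm_surjective A hd
  induction t with
  | zero =>
    have h0 : {x : AlgebraicClosure F | (Lm A)^[0] x = 0} = {0} := by
      ext x; simp
    rw [h0, pow_zero, Nat.card_coe_set_eq, Set.ncard_singleton]
  | succ t ih =>
    haveI : Finite ↥{x : AlgebraicClosure F | (Lm A)^[t+1] x = 0} :=
      (Kk_finite A hd (t+1)).to_subtype
    have hsm : ∀ c : ℕ, Lm A (c • z₀) = 0 := fun c => by
      rw [Lm_nsmul A hA, hz0k, smul_zero]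
    set f : ({x : AlgebraicClosure F | (Lm A)^[t] x = 0} × Fin p) →
        {x : AlgebraicClosure F | (Lm A)^[t+1] x = 0} :=
      fun yc => ⟨g yc.1.1 + (yc.2 : ℕ) • z₀, by
        have hy := yc.1.2
        simp only [Set.mem_setOf_eq] at hy ⊢
        rw [Function.iterate_succ_apply, Lm_add A hA, hg, hsm, add_zero, hy]⟩ with hf
    have hinj : Function.Injective f := by
      rintro ⟨⟨y, hy⟩, c⟩ ⟨⟨y', hy'⟩, c'⟩ h
      simp only [hf, Subtype.mk.injEq] at h
      have h1 : y = y' := by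
        have := congrArg (Lm A) h
        rwa [Lm_add A hA, Lm_add A hA, hg, hg, hsm, hsm, add_zero, add_zero] at this
      subst h1
      have h2 : ((c : ℕ) : AlgebraicClosure F) * z₀ = ((c' : ℕ) : AlgebraicClosure F) * z₀ := by
        have := add_left_cancel h
        rwa [nsmul_eq_mul, nsmul_eq_mul] at this
      have h3 : ((c : ℕ) : AlgebraicClosure F) = ((c' : ℕ) : AlgebraicClosure F) :=
        mul_right_cancel₀ hz0 h2
      have h4 : (c : ℕ) ≡ (c' : ℕ) [MOD p] :=
        (CharP.natCast_eq_natCast (AlgebraicClosure F) p).mp h3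
      have h5 : (c : ℕ) = (c' : ℕ) := by
        have := h4.eq_of_lt_of_lt c.2 c'.2
        exact this
      simp only [Prod.mk.injEq, Subtype.mk.injEq]
      exact ⟨trivial, Fin.ext h5⟩
    calc p ^ (t + 1) = p ^ t * p := pow_succ p t
      _ ≤ Nat.card {x : AlgebraicClosure F | (Lm A)^[t] x = 0} * p :=
          Nat.mul_le_mul_right p ih
      _ = Nat.card ({x : AlgebraicClosure F | (Lm A)^[t] x = 0} × Fin p) := by
          rw [Nat.card_prod]
          simp
      _ ≤ _ := Nat.card_le_card_of_injective f hinj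

open IntermediateField in
theorem exists_fix (x : AlgebraicClosure F) :
    ∃ d : ℕ, 1 ≤ d ∧ x ^ (Fintype.card F) ^ d = x := by
  have halg : IsIntegral F x :=
    (Algebra.IsAlgebraic.isAlgebraic (R := F) x).isIntegral
  haveI : FiniteDimensional F F⟮x⟯ := IntermediateField.adjoin.finiteDimensional halg
  haveI : Finite F⟮x⟯ := Module.finite_of_finite F
  letI : Fintype F⟮x⟯ := Fintype.ofFinite _
  have hcard : Fintype.card F⟮x⟯ = (Fintype.card F) ^ (Module.finrank F F⟮x⟯) :=
    Module.card_eq_pow_finrank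
  refine ⟨Module.finrank F F⟮x⟯, Module.finrank_pos, ?_⟩
  have hgen := FiniteField.pow_card (IntermediateField.AdjoinSimple.gen F x)
  rw [hcard] at hgen
  have := congrArg (algebraMap F⟮x⟯ (AlgebraicClosure F)) hgen
  rwa [map_pow, IntermediateField.AdjoinSimple.algebraMap_gen] at this

/-- fixed exponent grows under powers -/
theorem fix_pow {x : AlgebraicClosure F} {N : ℕ} (h : x ^ N = x) (k : ℕ) : x ^ N ^ k = x := by
  induction k with
  | zero => simp
  | succ k ih => rw [pow_succ, mul_comm, pow_mul, h, ih]

theorem mem_V_mul {x : AlgebraicClosure F} {m : ℕ} (h : x ^ (Fintype.card F) ^ m = x) (k : ℕ) :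
    x ^ (Fintype.card F) ^ (m * k) = x := by
  rw [pow_mul]
  exact fix_pow h k

theorem finite_subset_V {S : Set (AlgebraicClosure F)} (hS : S.Finite) :
    ∀ N : ℕ, ∃ r : ℕ, N ≤ r ∧ 1 ≤ r ∧ ∀ x ∈ S, x ^ (Fintype.card F) ^ r = x := by
  intro N
  have key : ∃ r : ℕ, 1 ≤ r ∧ ∀ x ∈ S, x ^ (Fintype.card F) ^ r = x := by
    choose d hd1 hd using fun x : AlgebraicClosure F => exists_fix x
    refine ⟨∏ x ∈ hS.toFinset, d x, ?_, fun x hx => ?_⟩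
    · exact Finset.one_le_prod' fun x _ => hd1 x
    · obtain ⟨k, hk⟩ := Finset.dvd_prod_of_mem d (hS.mem_toFinset.mpr hx)
      rw [hk]
      exact mem_V_mul (hd x) k
  obtain ⟨r, hr1, hr⟩ := key
  refine ⟨r * (N + 1), ?_, ?_, fun x hx => ?_⟩
  · calc N ≤ N + 1 := Nat.le_succ N
      _ ≤ r * (N + 1) := Nat.le_mul_of_pos_left _ hr1
  · exact Nat.one_le_iff_ne_zero.mpr (by positivity)
  · exact mem_V_mul (hr x hx) (N + 1)

end Aux4

section Aux5
set_option linter.unusedSectionVars false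
variable {p : ℕ} [Fact p.Prime] {F : Type*} [Field F] [Fintype F] [CharP F p]

include p in
theorem mem_V_sub {n : ℕ} {x y : AlgebraicClosure F}
    (hx : x ^ (Fintype.card F) ^ n = x) (hy : y ^ (Fintype.card F) ^ n = y) :
    (x - y) ^ (Fintype.card F) ^ n = x - y := by
  obtain ⟨σ, hσ, -⟩ := exists_powQ (p := p) (F := F) n
  rw [← hσ, map_sub, hσ, hσ, hx, hy]

include p in
theorem mem_V_add {n : ℕ} {x y : AlgebraicClosure F}
    (hx : x ^ (Fintype.card F) ^ n = x) (hy : y ^ (Fintype.card F) ^ n = y) :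
    (x + y) ^ (Fintype.card F) ^ n = x + y := by
  obtain ⟨σ, hσ, -⟩ := exists_powQ (p := p) (F := F) n
  rw [← hσ, map_add, hσ, hσ, hx, hy]

include p in
theorem Lm_iter_pow_q (A : Polynomial F) (t j : ℕ) (x : AlgebraicClosure F) :
    (Lm A)^[t] (x ^ (Fintype.card F) ^ j) = ((Lm A)^[t] x) ^ (Fintype.card F) ^ j := by
  induction t generalizing x with
  | zero => simp
  | succ t ih =>
    rw [Function.iterate_succ_apply, Lm_pow_q (p := p), ih, Function.iterate_succ_apply]

include p in
theorem mem_V_iter (A : Polynomial F) {n : ℕ} {x : AlgebraicClosure F}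
    (hx : x ^ (Fintype.card F) ^ n = x) (t : ℕ) :
    ((Lm A)^[t] x) ^ (Fintype.card F) ^ n = (Lm A)^[t] x := by
  rw [← Lm_iter_pow_q (p := p), hx]

include p in
theorem V_card (n : ℕ) (hn : n ≠ 0) :
    {y : AlgebraicClosure F | y ^ (Fintype.card F) ^ n = y}.Finite ∧
      Nat.card {y : AlgebraicClosure F | y ^ (Fintype.card F) ^ n = y} =
        (Fintype.card F) ^ n := by
  have hq1 : 1 < Fintype.card F := Fintype.one_lt_card
  obtain ⟨f, hpp, hf⟩ := FiniteField.card F p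
  have hdvd : p ∣ (Fintype.card F) ^ n := by
    rw [hf, ← pow_mul]
    exact dvd_pow_self p (Nat.mul_ne_zero f.2.ne' hn)
  set P : Polynomial F := X ^ (Fintype.card F) ^ n - X with hP
  have hsep : P.Separable := galois_poly_separable p _ hdvd
  have hsplit : (P.map (algebraMap F (AlgebraicClosure F))).Splits := IsAlgClosed.splits _
  have hdeg : P.natDegree = (Fintype.card F) ^ n :=
    FiniteField.X_pow_card_sub_X_natDegree_eq F (Nat.one_lt_pow hn hq1)
  have hset : P.rootSet (AlgebraicClosure F) =
      {y : AlgebraicClosure F | y ^ (Fintype.card F) ^ n = y} := by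
    ext y
    rw [Polynomial.mem_rootSet]
    have hP0 : P ≠ 0 := by
      refine Polynomial.ne_zero_of_natDegree_gt (n := 0) ?_
      rw [hdeg]; positivity
    simp only [Set.mem_setOf_eq, hP, map_sub, map_pow, aeval_X, sub_eq_zero]
    exact ⟨fun h => h.2, fun h => ⟨hP0, h⟩⟩
  have hfin : (P.rootSet (AlgebraicClosure F)).Finite := P.rootSet_finite _
  constructor
  · rwa [hset] at hfin
  · have := card_rootSet_eq_natDegree hsep hsplit
    rw [← hset, Nat.card_eq_fintype_card (α := ↥(P.rootSet (AlgebraicClosure F)))]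
    rw [this, hdeg]

theorem powQ_iter {r : ℕ} {σ : AlgebraicClosure F →+* AlgebraicClosure F}
    (hσ : ∀ z, σ z = z ^ (Fintype.card F) ^ r) (j : ℕ) (x : AlgebraicClosure F) :
    σ^[j] x = x ^ (Fintype.card F) ^ (r * j) := by
  induction j with
  | zero => simp
  | succ j ih =>
    rw [Function.iterate_succ_apply', ih, hσ, ← pow_mul, ← pow_add, mul_add, mul_one]

theorem keyC (A : Polynomial F) (hA : IsAdditivePoly p A) (r m : ℕ) (hm : ¬ p ∣ m)
    (hroots : ∀ z : AlgebraicClosure F, Lm A z = 0 → z ^ (Fintype.card F) ^ r = z) :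
    ∀ t : ℕ, ∀ x : AlgebraicClosure F, (Lm A)^[t] x = 0 →
      x ^ (Fintype.card F) ^ (r * m) = x → x ^ (Fintype.card F) ^ r = x := by
  intro t
  induction t with
  | zero =>
    intro x hx _
    simp only [Function.iterate_zero, id_eq] at hx
    subst hx
    exact zero_pow (by positivity)
  | succ t ih =>
    intro x hx hxm
    obtain ⟨σ, hσ, -⟩ := exists_powQ (p := p) (F := F) r
    obtain ⟨τ, hτ, -⟩ := exists_powQ (p := p) (F := F) (r * m)
    set y := x ^ (Fintype.card F) ^ r - x with hy
    have hyt : (Lm A)^[t] y = 0 := by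
      rw [hy, Lm_iter_sub A hA, Lm_iter_pow_q (p := p)]
      have hk1 : Lm A ((Lm A)^[t] x) = 0 :=
        (Function.iterate_succ_apply' (Lm A) t x).symm.trans hx
      rw [hroots _ hk1, sub_self]
    have hym : y ^ (Fintype.card F) ^ (r * m) = y := by
      have : τ y = y := by
        rw [hy, map_sub, map_pow, hτ, hxm]
      rwa [hτ] at this
    have hyr : y ^ (Fintype.card F) ^ r = y := ih y hyt hym
    have hclaim : ∀ j : ℕ, σ^[j] x = x + j • y := by
      intro j
      induction j with
      | zero => simp
      | succ j ihj =>
        rw [Function.iterate_succ_apply', ihj, map_add, hσ x]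
        have hσy : σ (j • y) = j • y := by
          rw [map_nsmul, hσ, hyr]
        rw [hσy]
        have hx' : x ^ Fintype.card F ^ r = x + y := by rw [hy]; ring
        rw [hx', succ_nsmul]
        ring
    have hm' : σ^[m] x = x := by
      rw [powQ_iter hσ m x, hxm]
    rw [hclaim m] at hm'
    have hmy : m • y = 0 := by
      have := hm'
      nth_rewrite 2 [← add_zero x] at this
      exact add_left_cancel this
    have hcast : ((m : ℕ) : AlgebraicClosure F) * y = 0 := by
      rwa [nsmul_eq_mul] at hmy
    have hmne : ((m : ℕ) : AlgebraicClosure F) ≠ 0 := by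
      rw [Ne, CharP.cast_eq_zero_iff (AlgebraicClosure F) p]
      exact hm
    have hy0 : y = 0 := by
      rcases mul_eq_zero.mp hcast with h | h
      · exact absurd h hmne
      · exact h
    rw [hy, sub_eq_zero] at hy0
    exact hy0

end Aux5

section Aux6
set_option linter.unusedSectionVars false
variable {p : ℕ} [Fact p.Prime] {F : Type*} [Field F] [Fintype F] [CharP F p]

include p in
theorem count_upper (A : Polynomial F) (hA : IsAdditivePoly p A) (n t : ℕ) (hn : n ≠ 0)
    (hK : {x : AlgebraicClosure F | (Lm A)^[t] x = 0} ⊆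
      {y : AlgebraicClosure F | y ^ (Fintype.card F) ^ n = y}) :
    Nat.card ((Lm A)^[t] '' {y : AlgebraicClosure F | y ^ (Fintype.card F) ^ n = y}) *
      Nat.card {x : AlgebraicClosure F | (Lm A)^[t] x = 0} ≤ (Fintype.card F) ^ n := by
  classical
  obtain ⟨hVfin, hVcard⟩ := V_card (p := p) (F := F) n hn
  haveI : Finite ↥{y : AlgebraicClosure F | y ^ (Fintype.card F) ^ n = y} := hVfin.to_subtype
  have hsel : ∀ z : ↥((Lm A)^[t] '' {y : AlgebraicClosure F | y ^ (Fintype.card F) ^ n = y}),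
      ∃ x : AlgebraicClosure F, x ∈ {y : AlgebraicClosure F | y ^ (Fintype.card F) ^ n = y} ∧
        (Lm A)^[t] x = z := fun z => z.2
  choose sel hselV hselL using hsel
  set φ : ↥((Lm A)^[t] '' {y : AlgebraicClosure F | y ^ (Fintype.card F) ^ n = y}) ×
      ↥{x : AlgebraicClosure F | (Lm A)^[t] x = 0} →
      ↥{y : AlgebraicClosure F | y ^ (Fintype.card F) ^ n = y} :=
    fun w => ⟨sel w.1 + w.2.1, mem_V_add (p := p) (hselV w.1) (hK w.2.2)⟩ with hφdef
  have hφ : Function.Injective φ := by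
    rintro ⟨z, k⟩ ⟨z', k'⟩ h
    simp only [hφdef, Subtype.mk.injEq] at h
    have hk : (Lm A)^[t] (k : AlgebraicClosure F) = 0 := k.2
    have hk' : (Lm A)^[t] (k' : AlgebraicClosure F) = 0 := k'.2
    have h1 : (z : AlgebraicClosure F) = z' := by
      have h2 := congrArg ((Lm A)^[t]) h
      rwa [Lm_iter_add A hA, Lm_iter_add A hA, hselL, hselL, hk, hk', add_zero, add_zero] at h2
    have hz : z = z' := Subtype.ext h1
    subst hz
    have h3 : (k : AlgebraicClosure F) = k' := by
      have := add_left_cancel h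
      exact this
    simp only [Prod.mk.injEq]
    exact ⟨trivial, Subtype.ext h3⟩
  calc Nat.card ↥((Lm A)^[t] '' {y : AlgebraicClosure F | y ^ (Fintype.card F) ^ n = y}) *
        Nat.card ↥{x : AlgebraicClosure F | (Lm A)^[t] x = 0}
      = Nat.card (↥((Lm A)^[t] '' {y : AlgebraicClosure F | y ^ (Fintype.card F) ^ n = y}) ×
        ↥{x : AlgebraicClosure F | (Lm A)^[t] x = 0}) := (Nat.card_prod _ _).symm
    _ ≤ Nat.card ↥{y : AlgebraicClosure F | y ^ (Fintype.card F) ^ n = y} :=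
        Nat.card_le_card_of_injective φ hφ
    _ = (Fintype.card F) ^ n := hVcard

include p in
theorem count_lower (A : Polynomial F) (hA : IsAdditivePoly p A) (n t : ℕ) (hn : n ≠ 0) :
    (Fintype.card F) ^ n ≤
      Nat.card ((Lm A)^[t] '' {y : AlgebraicClosure F | y ^ (Fintype.card F) ^ n = y}) *
        Nat.card ({x : AlgebraicClosure F | (Lm A)^[t] x = 0} ∩
          {y : AlgebraicClosure F | y ^ (Fintype.card F) ^ n = y} : Set (AlgebraicClosure F)) := by
  classical
  obtain ⟨hVfin, hVcard⟩ := V_card (p := p) (F := F) n hn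
  haveI : Finite ↥((Lm A)^[t] '' {y : AlgebraicClosure F | y ^ (Fintype.card F) ^ n = y}) :=
    (hVfin.image _).to_subtype
  haveI : Finite ↥({x : AlgebraicClosure F | (Lm A)^[t] x = 0} ∩
      {y : AlgebraicClosure F | y ^ (Fintype.card F) ^ n = y} : Set (AlgebraicClosure F)) :=
    (hVfin.subset Set.inter_subset_right).to_subtype
  have hsel : ∀ z : ↥((Lm A)^[t] '' {y : AlgebraicClosure F | y ^ (Fintype.card F) ^ n = y}),
      ∃ x : AlgebraicClosure F, x ∈ {y : AlgebraicClosure F | y ^ (Fintype.card F) ^ n = y} ∧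
        (Lm A)^[t] x = z := fun z => z.2
  choose sel hselV hselL using hsel
  set ψ : ↥((Lm A)^[t] '' {y : AlgebraicClosure F | y ^ (Fintype.card F) ^ n = y}) ×
      ↥({x : AlgebraicClosure F | (Lm A)^[t] x = 0} ∩
        {y : AlgebraicClosure F | y ^ (Fintype.card F) ^ n = y} : Set (AlgebraicClosure F)) →
      ↥{y : AlgebraicClosure F | y ^ (Fintype.card F) ^ n = y} :=
    fun w => ⟨sel w.1 + w.2.1, mem_V_add (p := p) (hselV w.1) w.2.2.2⟩ with hψdef
  have hψ : Function.Surjective ψ := by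
    rintro ⟨x, hx⟩
    have hximg : (Lm A)^[t] x ∈
        (Lm A)^[t] '' {y : AlgebraicClosure F | y ^ (Fintype.card F) ^ n = y} :=
      Set.mem_image_of_mem _ hx
    set z : ↥((Lm A)^[t] '' {y : AlgebraicClosure F | y ^ (Fintype.card F) ^ n = y}) :=
      ⟨(Lm A)^[t] x, hximg⟩ with hzdef
    have hker : (Lm A)^[t] (x - sel z) = 0 := by
      rw [Lm_iter_sub A hA, hselL z]
      simp [hzdef]
    have hmem : x - sel z ∈ ({x : AlgebraicClosure F | (Lm A)^[t] x = 0} ∩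
        {y : AlgebraicClosure F | y ^ (Fintype.card F) ^ n = y} : Set (AlgebraicClosure F)) :=
      ⟨hker, mem_V_sub (p := p) hx (hselV z)⟩
    refine ⟨⟨z, ⟨x - sel z, hmem⟩⟩, ?_⟩
    simp only [hψdef]
    exact Subtype.ext (by ring)
  calc (Fintype.card F) ^ n
      = Nat.card ↥{y : AlgebraicClosure F | y ^ (Fintype.card F) ^ n = y} := hVcard.symm
    _ ≤ Nat.card (↥((Lm A)^[t] '' {y : AlgebraicClosure F | y ^ (Fintype.card F) ^ n = y}) ×
        ↥({x : AlgebraicClosure F | (Lm A)^[t] x = 0} ∩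
          {y : AlgebraicClosure F | y ^ (Fintype.card F) ^ n = y} : Set (AlgebraicClosure F))) :=
        Nat.card_le_card_of_surjective ψ hψ
    _ = _ := Nat.card_prod _ _

end Aux6

section Aux7
set_option linter.unusedSectionVars false
variable {p : ℕ} [Fact p.Prime] {F : Type*} [Field F] [Fintype F] [CharP F p]

include p in
theorem exists_stab (A : Polynomial F) (hA : IsAdditivePoly p A) (n : ℕ) (hn : n ≠ 0) :
    ∃ T : ℕ, ∀ y ∈ (Lm A)^[T] '' {y : AlgebraicClosure F | y ^ (Fintype.card F) ^ n = y},
      y ^ (Fintype.card F) ^ n = y ∧ ∃ k : ℕ, 0 < k ∧ (Lm A)^[k] y = y := by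
  classical
  obtain ⟨hVfin, hVcard⟩ := V_card (p := p) (F := F) n hn
  set V : Set (AlgebraicClosure F) := {y : AlgebraicClosure F | y ^ (Fintype.card F) ^ n = y}
    with hVdef
  set S : ℕ → Set (AlgebraicClosure F) := fun t => (Lm A)^[t] '' V with hSdef
  have hSfin : ∀ t, (S t).Finite := fun t => hVfin.image _
  have hLV : Lm A '' V ⊆ V := by
    rintro - ⟨x, hx, rfl⟩
    show (Lm A x) ^ (Fintype.card F) ^ n = Lm A x
    rw [← Lm_pow_q (p := p)]
    exact congrArg (Lm A) hx
  have hmono : ∀ t, S (t + 1) ⊆ S t := by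
    intro t
    have : (Lm A)^[t + 1] '' V = (Lm A)^[t] '' (Lm A '' V) := by
      rw [Function.iterate_succ, Set.image_comp]
    rw [hSdef]
    simp only [this]
    exact Set.image_mono hLV
  have hstab : ∃ T, S (T + 1) = S T := by
    by_contra hcon
    push_neg at hcon
    have hdec : ∀ t, (S (t + 1)).ncard < (S t).ncard := fun t =>
      Set.ncard_lt_ncard (Set.ssubset_iff_subset_ne.mpr ⟨hmono t, hcon t⟩) (hSfin t)
    have hbound : ∀ t, (S t).ncard + t ≤ (S 0).ncard := by
      intro t
      induction t with
      | zero => simp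
      | succ t ih =>
        have := hdec t
        omega
    have := hbound ((S 0).ncard + 1)
    omega
  obtain ⟨T, hT⟩ := hstab
  have hLS : Lm A '' S T = S T := by
    have h1 : S (T + 1) = Lm A '' S T := by
      rw [hSdef]
      simp only [Function.iterate_succ', Set.image_comp]
    rw [← h1, hT]
  haveI : Finite ↥(S T) := (hSfin T).to_subtype
  set e : ↥(S T) → ↥(S T) := fun x => ⟨Lm A x.1, by
    have hmi := Set.mem_image_of_mem (Lm A) x.2
    rwa [hLS] at hmi⟩ with hedef
  have hesurj : Function.Surjective e := by
    rintro ⟨y, hy⟩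
    rw [← hLS] at hy
    obtain ⟨x, hx, hxy⟩ := hy
    exact ⟨⟨x, hx⟩, Subtype.ext hxy⟩
  have heinj : Function.Injective e := (Finite.injective_iff_surjective).mpr hesurj
  have hecoe : ∀ (k : ℕ) (x : ↥(S T)), ((e^[k] x : ↥(S T)) : AlgebraicClosure F) =
      (Lm A)^[k] (x : AlgebraicClosure F) := by
    intro k
    induction k with
    | zero => intro x; simp
    | succ k ih =>
      intro x
      rw [Function.iterate_succ_apply', Function.iterate_succ_apply', ← ih]
  refine ⟨T, fun y hy => ?_⟩
  have hyV : y ∈ V := by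
    obtain ⟨x, hx, rfl⟩ := hy
    exact mem_V_iter (p := p) A hx T
  refine ⟨hyV, ?_⟩
  set Y : ↥(S T) := ⟨y, hy⟩ with hYdef
  obtain ⟨a, b, hab, heq⟩ := Finite.exists_ne_map_eq_of_infinite (fun j : ℕ => e^[j] Y)
  wlog hlt : a < b generalizing a b
  · exact this b a hab.symm heq.symm (by omega)
  have hk : e^[b - a] Y = Y := by
    have h2 : e^[a] (e^[b - a] Y) = e^[a] Y := by
      rw [← Function.iterate_add_apply]
      have : a + (b - a) = b := by omega
      rw [this]
      exact heq.symm
    exact heinj.iterate a h2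
  refine ⟨b - a, by omega, ?_⟩
  have := congrArg (Subtype.val) hk
  rwa [hecoe] at this

end Aux7

noncomputable def periodicCount' {F : Type*} [Field F] [Fintype F]
    (A : Polynomial F) (n : ℕ) : ℕ :=
  Nat.card {y : AlgebraicClosure F // y ^ Fintype.card F ^ n = y ∧
    ∃ t : ℕ, 0 < t ∧ (fun z => Polynomial.aeval z A)^[t] y = y}

section Aux8
set_option linter.unusedSectionVars false
variable {p : ℕ} [Fact p.Prime] {F : Type*} [Field F] [Fintype F] [CharP F p]

theorem periodicCount'_eq (A : Polynomial F) (n : ℕ) :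
    periodicCount' A n = Nat.card {y : AlgebraicClosure F // y ^ Fintype.card F ^ n = y ∧
      ∃ t : ℕ, 0 < t ∧ (Lm A)^[t] y = y} := rfl

include p in
theorem main_upper (A : Polynomial F) (hA : IsAdditivePoly p A)
    (hexc : ¬ ∃ (a : F) (h : ℕ), A = Polynomial.C a * Polynomial.X ^ p ^ h)
    (n t : ℕ) (hn : n ≠ 0)
    (hK : {x : AlgebraicClosure F | (Lm A)^[t] x = 0} ⊆
      {y : AlgebraicClosure F | y ^ (Fintype.card F) ^ n = y}) :
    periodicCount' A n * p ^ t ≤ (Fintype.card F) ^ n := by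
  classical
  obtain ⟨hVfin, hVcard⟩ := V_card (p := p) (F := F) n hn
  haveI : Finite ↥((Lm A)^[t] '' {y : AlgebraicClosure F | y ^ (Fintype.card F) ^ n = y}) :=
    (hVfin.image _).to_subtype
  have hPsub : ∀ y : AlgebraicClosure F,
      (y ^ Fintype.card F ^ n = y ∧ ∃ s : ℕ, 0 < s ∧ (Lm A)^[s] y = y) →
      y ∈ (Lm A)^[t] '' {y : AlgebraicClosure F | y ^ (Fintype.card F) ^ n = y} := by
    rintro y ⟨hy1, s, hs, hsy⟩
    have hyst : (Lm A)^[s * t] y = y := by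
      rw [Function.iterate_mul]
      exact Function.iterate_fixed hsy t
    have htle : t ≤ s * t := Nat.le_mul_of_pos_left t hs
    refine ⟨(Lm A)^[s * t - t] y, mem_V_iter (p := p) A hy1 _, ?_⟩
    rw [← Function.iterate_add_apply]
    have : t + (s * t - t) = s * t := by omega
    rw [this, hyst]
  set ι : {y : AlgebraicClosure F // y ^ Fintype.card F ^ n = y ∧
      ∃ s : ℕ, 0 < s ∧ (Lm A)^[s] y = y} →
      ↥((Lm A)^[t] '' {y : AlgebraicClosure F | y ^ (Fintype.card F) ^ n = y}) :=
    fun w => ⟨w.1, hPsub w.1 w.2⟩ with hιdef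
  have hι : Function.Injective ι := by
    rintro ⟨y, hy⟩ ⟨y', hy'⟩ h
    simp only [hιdef, Subtype.mk.injEq] at h
    exact Subtype.ext h
  have h1 : periodicCount' A n ≤
      Nat.card ↥((Lm A)^[t] '' {y : AlgebraicClosure F | y ^ (Fintype.card F) ^ n = y}) := by
    rw [periodicCount'_eq]
    exact Nat.card_le_card_of_injective ι hι
  calc periodicCount' A n * p ^ t
      ≤ Nat.card ↥((Lm A)^[t] '' {y : AlgebraicClosure F | y ^ (Fintype.card F) ^ n = y}) *
        Nat.card {x : AlgebraicClosure F | (Lm A)^[t] x = 0} :=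
        Nat.mul_le_mul h1 (card_Kk A hA hexc t)
    _ ≤ (Fintype.card F) ^ n := count_upper A hA n t hn hK

include p in
theorem main_lower (A : Polynomial F) (hA : IsAdditivePoly p A)
    (r m : ℕ) (hr : r ≠ 0) (hm0 : m ≠ 0) (hm : ¬ p ∣ m)
    (hroots : ∀ z : AlgebraicClosure F, Lm A z = 0 → z ^ (Fintype.card F) ^ r = z) :
    (Fintype.card F) ^ (r * m) ≤ periodicCount' A (r * m) * (Fintype.card F) ^ r := by
  classical
  have hn : r * m ≠ 0 := Nat.mul_ne_zero hr hm0
  obtain ⟨T, hT⟩ := exists_stab (p := p) A hA (r * m) hn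
  obtain ⟨hVfin, hVcard⟩ := V_card (p := p) (F := F) (r * m) hn
  obtain ⟨hVrfin, hVrcard⟩ := V_card (p := p) (F := F) r hr
  haveI : Finite ↥{y : AlgebraicClosure F | y ^ (Fintype.card F) ^ r = y} := hVrfin.to_subtype
  have h1 := count_lower (p := p) A hA (r * m) T hn
  have hsub : ({x : AlgebraicClosure F | (Lm A)^[T] x = 0} ∩
      {y : AlgebraicClosure F | y ^ (Fintype.card F) ^ (r * m) = y} : Set (AlgebraicClosure F)) ⊆
      {y : AlgebraicClosure F | y ^ (Fintype.card F) ^ r = y} :=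
    fun x hx => keyC A hA r m hm hroots T x hx.1 hx.2
  have h2 : Nat.card ({x : AlgebraicClosure F | (Lm A)^[T] x = 0} ∩
      {y : AlgebraicClosure F | y ^ (Fintype.card F) ^ (r * m) = y} : Set (AlgebraicClosure F)) ≤
      (Fintype.card F) ^ r := by
    rw [← hVrcard]
    exact Nat.card_le_card_of_injective (Set.inclusion hsub) (Set.inclusion_injective hsub)
  haveI : Finite {y : AlgebraicClosure F // y ^ Fintype.card F ^ (r * m) = y ∧
      ∃ s : ℕ, 0 < s ∧ (Lm A)^[s] y = y} := by
    have hfin : {y : AlgebraicClosure F | y ^ Fintype.card F ^ (r * m) = y ∧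
        ∃ s : ℕ, 0 < s ∧ (Lm A)^[s] y = y}.Finite := hVfin.subset fun y hy => hy.1
    exact hfin.to_subtype
  have h3 : Nat.card ↥((Lm A)^[T] ''
      {y : AlgebraicClosure F | y ^ (Fintype.card F) ^ (r * m) = y}) ≤
      periodicCount' A (r * m) := by
    rw [periodicCount'_eq]
    set κ : ↥((Lm A)^[T] '' {y : AlgebraicClosure F | y ^ (Fintype.card F) ^ (r * m) = y}) →
        {y : AlgebraicClosure F // y ^ Fintype.card F ^ (r * m) = y ∧
          ∃ s : ℕ, 0 < s ∧ (Lm A)^[s] y = y} :=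
      fun w => ⟨w.1, (hT w.1 w.2).1, (hT w.1 w.2).2⟩ with hκdef
    have hκ : Function.Injective κ := by
      rintro ⟨y, hy⟩ ⟨y', hy'⟩ h
      simp only [hκdef, Subtype.mk.injEq] at h
      exact Subtype.ext h
    exact Nat.card_le_card_of_injective κ hκ
  calc (Fintype.card F) ^ (r * m)
      ≤ Nat.card ↥((Lm A)^[T] ''
          {y : AlgebraicClosure F | y ^ (Fintype.card F) ^ (r * m) = y}) *
        Nat.card ({x : AlgebraicClosure F | (Lm A)^[T] x = 0} ∩
          {y : AlgebraicClosure F | y ^ (Fintype.card F) ^ (r * m) = y} :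
            Set (AlgebraicClosure F)) := h1
    _ ≤ periodicCount' A (r * m) * (Fintype.card F) ^ r := Nat.mul_le_mul h3 h2

end Aux8

theorem periodic_proportion_liminf_limsup (p : ℕ) [Fact p.Prime] (F : Type*) [Field F]
    [Fintype F] [CharP F p] (A : Polynomial F) (hA : IsAdditivePoly p A)
    (hexc : ¬ ∃ (a : F) (h : ℕ), A = Polynomial.C a * Polynomial.X ^ p ^ h) :
    Filter.liminf
        (fun n : ℕ => (periodicCount A n : ℝ) / (Fintype.card F : ℝ) ^ n) Filter.atTop = 0 ∧
    0 < Filter.limsup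
        (fun n : ℕ => (periodicCount A n : ℝ) / (Fintype.card F : ℝ) ^ n) Filter.atTop := by
  classical
  have hp2 : 2 ≤ p := (Fact.out : p.Prime).two_le
  have hpc : ∀ n, periodicCount A n = periodicCount' A n := fun n => rfl
  have hq1 : 1 < Fintype.card F := Fintype.one_lt_card
  have hqR : (1 : ℝ) < (Fintype.card F : ℝ) := by exact_mod_cast hq1
  have hqpos : (0 : ℝ) < (Fintype.card F : ℝ) := by positivity
  obtain ⟨i, j, hi, hj, hij, hd⟩ := support_facts A hA hexc
  set u : ℕ → ℝ := fun n : ℕ => (periodicCount A n : ℝ) / (Fintype.card F : ℝ) ^ n with hu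
  -- upper bound: periodic count at most q^n
  have hub : ∀ n : ℕ, n ≠ 0 → periodicCount A n ≤ (Fintype.card F) ^ n := by
    intro n hn
    have h0 : {x : AlgebraicClosure F | (Lm A)^[0] x = 0} ⊆
        {y : AlgebraicClosure F | y ^ (Fintype.card F) ^ n = y} := by
      intro x hx
      simp only [Function.iterate_zero, id_eq, Set.mem_setOf_eq] at hx
      subst hx
      show (0 : AlgebraicClosure F) ^ (Fintype.card F) ^ n = 0
      exact zero_pow (by positivity)
    have := main_upper A hA hexc n 0 hn h0
    rw [← hpc n] at this
    simpa using this
  have hunn : ∀ n, 0 ≤ u n := fun n => by positivity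
  have hule : ∀ n, n ≠ 0 → u n ≤ 1 := by
    intro n hn
    rw [hu]
    rw [div_le_one (by positivity)]
    exact_mod_cast hub n hn
  have hbdd : Filter.IsBoundedUnder (· ≤ ·) Filter.atTop u :=
    ⟨1, Filter.eventually_map.mpr (Filter.eventually_atTop.mpr
      ⟨1, fun n hn => hule n (by omega)⟩)⟩
  have hbddge : Filter.IsBoundedUnder (· ≥ ·) Filter.atTop u :=
    ⟨0, Filter.eventually_map.mpr (Filter.Eventually.of_forall fun n => hunn n)⟩
  -- the r for the roots of A
  have hK1fin : {x : AlgebraicClosure F | Lm A x = 0}.Finite := by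
    have := Kk_finite A hd 1
    simpa using this
  obtain ⟨r, -, hr1, hrfix⟩ := finite_subset_V hK1fin 1
  -- frequently large
  have hfreq : ∃ᶠ n in Filter.atTop, ((Fintype.card F : ℝ) ^ r)⁻¹ ≤ u n := by
    rw [Filter.frequently_atTop]
    intro N
    set m : ℕ := N * p + 1 with hm'
    have hm0 : m ≠ 0 := by omega
    have hmp : ¬ p ∣ m := by
      intro hdvd
      have h2 : p ∣ N * p := Dvd.intro_left N rfl
      have h3 := Nat.dvd_sub hdvd h2
      simp only [hm', Nat.add_sub_cancel_left] at h3
      have := Nat.dvd_one.mp h3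
      omega
    refine ⟨r * m, ?_, ?_⟩
    · have hNm : N ≤ m := by
        have : N ≤ N * p := Nat.le_mul_of_pos_right N (by omega)
        omega
      calc N ≤ m := hNm
        _ ≤ r * m := Nat.le_mul_of_pos_left m hr1
    · have hle := main_lower A hA r m (by omega) hm0 hmp
        (fun z hz => hrfix z hz)
      rw [← hpc] at hle
      rw [hu]
      rw [le_div_iff₀ (by positivity)]
      rw [inv_mul_eq_div, div_le_iff₀ (by positivity)]
      calc ((Fintype.card F : ℝ)) ^ (r * m)
          ≤ ((periodicCount A (r * m) : ℝ)) * (Fintype.card F : ℝ) ^ r := by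
            exact_mod_cast hle
        _ = _ := by ring
  have hlimsup : 0 < Filter.limsup u Filter.atTop := by
    have h1 : ((Fintype.card F : ℝ) ^ r)⁻¹ ≤ Filter.limsup u Filter.atTop :=
      Filter.le_limsup_of_frequently_le hfreq hbdd
    have h2 : (0 : ℝ) < ((Fintype.card F : ℝ) ^ r)⁻¹ := by positivity
    linarith
  -- frequently small
  have hfreqle : ∀ t : ℕ, ∃ᶠ n in Filter.atTop, u n ≤ (((p : ℝ)) ^ t)⁻¹ := by
    intro t
    rw [Filter.frequently_atTop]
    intro N
    obtain ⟨n, hnN, hn1, hnfix⟩ := finite_subset_V (Kk_finite A hd t) (max N 1)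
    refine ⟨n, le_trans (le_max_left N 1) hnN, ?_⟩
    have hK : {x : AlgebraicClosure F | (Lm A)^[t] x = 0} ⊆
        {y : AlgebraicClosure F | y ^ (Fintype.card F) ^ n = y} :=
      fun x hx => hnfix x hx
    have hmain := main_upper A hA hexc n t (by omega) hK
    rw [← hpc] at hmain
    rw [hu]
    rw [div_le_iff₀ (by positivity), inv_mul_eq_div, le_div_iff₀ (by positivity)]
    exact_mod_cast hmain
  have hliminf : Filter.liminf u Filter.atTop = 0 := by
    refine le_antisymm ?_ ?_
    · by_contra hcon
      push_neg at hcon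
      have hpos : 0 < Filter.liminf u Filter.atTop := hcon
      obtain ⟨t, ht⟩ := pow_unbounded_of_one_lt
        ((Filter.liminf u Filter.atTop)⁻¹) (by exact_mod_cast hp2.trans_lt' one_lt_two : (1:ℝ) < (p:ℝ))
      have hlt : (((p : ℝ)) ^ t)⁻¹ < Filter.liminf u Filter.atTop :=
        (inv_lt_comm₀ (by positivity) hpos).mpr ht
      have hle : Filter.liminf u Filter.atTop ≤ (((p : ℝ)) ^ t)⁻¹ :=
        Filter.liminf_le_of_frequently_le (hfreqle t) hbddge
      linarith
    · exact Filter.le_liminf_of_le hbdd.isCoboundedUnder_ge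
        (Filter.Eventually.of_forall fun n => hunn n)
  exact ⟨hliminf, hlimsup⟩
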